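/- Discrete estimate for elliptic polynomials: Let P be an elliptic polynomial in n variables with complex coefficients and let α ∈ ℕ₀ⁿ with |α| ≤ deg P. Then there exist a constant C > 0 and a finite set G ⊂ ℤⁿ such that |k|^{|α|} · |Δ^α(P|_{ℤⁿ})(k)| ≤ C · |P(k)| for all k ∈ ℤⁿ \ G. -/

import Mathlib

open scoped BigOperators

/-- One-step discrete difference in direction `j`: `Δ_j M (k) = M k - M (k - e_j)`. -/
def discDiff {n : ℕ} {V : Type*} [AddCommGroup V] (j : Fin n) :
    ((Fin n → ℤ) → V) → ((Fin n → ℤ) → V) :=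
  fun M k => M k - M (k - Pi.single j 1)

/-- Iterated discrete difference `Δ^γ = Δ_1^{γ_1} ∘ ⋯ ∘ Δ_n^{γ_n}` for a multi-index `γ`. -/
def discDiffMulti {n : ℕ} {V : Type*} [AddCommGroup V] (γ : Fin n → ℕ) :
    ((Fin n → ℤ) → V) → ((Fin n → ℤ) → V) :=
  (List.finRange n).foldr (fun j F => (discDiff j)^[γ j] ∘ F) id

/-- `P` is elliptic: its principal part `P^#` (the homogeneous component of degree
`deg P`) does not vanish on `ℝⁿ \ {0}`. -/
def IsElliptic {n : ℕ} (P : MvPolynomial (Fin n) ℂ) : Prop :=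
  ∀ ξ : EuclideanSpace ℝ (Fin n), ξ ≠ 0 →
    MvPolynomial.eval (fun i => (ξ i : ℂ))
      (MvPolynomial.homogeneousComponent P.totalDegree P) ≠ 0

/-!
Each `Δ_j` lowers the total degree of a polynomial restricted to `ℤⁿ` by one, because
`X_j ^ b - (X_j - 1) ^ b` has degree `b - 1`; hence `Δ^α (P|_ℤⁿ)` is the restriction of a
polynomial of degree `≤ deg P - |α|` and is `O(|k| ^ (deg P - |α|))`. Ellipticity gives the
matching lower bound `|P(x)| ≥ c |x| ^ deg P` for large `|x|`: by homogeneity the principal part is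
at least its (positive) minimum on the unit sphere times `|x| ^ deg P`, and the remaining terms are
`O(|x| ^ (deg P - 1))`. Only finitely many lattice points lie in any ball.
-/

open MvPolynomial Finset Filter

section PolynomialDifference

variable {n : ℕ} {R : Type*} [CommRing R]

noncomputable def shiftDown (j : Fin n) : MvPolynomial (Fin n) R →ₐ[R] MvPolynomial (Fin n) R :=
  aeval (X - Pi.single j 1)

theorem eval_shiftDown (j : Fin n) (x : Fin n → R) (Q : MvPolynomial (Fin n) R) :
    eval x (shiftDown j Q) = eval (x - Pi.single j 1) Q := by
  rw [shiftDown, ← aeval_eq_eval, aeval_eq_bind₁, aeval_bind₁, aeval_eq_eval]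
  congr 2
  funext i
  by_cases h : i = j <;> simp [h]

theorem shiftDown_monomial_of_apply_eq_zero (j : Fin n) {β : Fin n →₀ ℕ} (hβ : β j = 0) (c : R) :
    shiftDown j (monomial β c) = monomial β c := by
  rw [shiftDown, aeval_monomial, algebraMap_eq, monomial_eq]
  congr 1
  refine Finsupp.prod_congr fun i hi => ?_
  have hij : i ≠ j := by rintro rfl; exact Finsupp.mem_support_iff.mp hi hβ
  simp [hij]

theorem totalDegree_X_pow_sub_X_sub_one_pow_le (j : Fin n) (b : ℕ) :
    ((X j : MvPolynomial (Fin n) R) ^ b - (X j - 1) ^ b).totalDegree ≤ b - 1 := by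
  -- `X - (X - 1) = 1` turns the difference of powers into a geometric sum
  rw [← Commute.geom_sum₂_mul (Commute.all _ _), sub_sub_cancel, mul_one]
  refine totalDegree_finsetSum_le fun i hi => ?_
  have hX : (X j : MvPolynomial (Fin n) R).totalDegree ≤ 1 :=
    (totalDegree_monomial_le _ _).trans (by simp)
  have hX1 : (X j - 1 : MvPolynomial (Fin n) R).totalDegree ≤ 1 := by
    rw [← C_1]; exact (totalDegree_sub_C_le _ _).trans hX
  calc _ ≤ (X j ^ i : MvPolynomial (Fin n) R).totalDegree
        + ((X j - 1) ^ (b - 1 - i) : MvPolynomial (Fin n) R).totalDegree := totalDegree_mul _ _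
    _ ≤ i * 1 + (b - 1 - i) * 1 := by gcongr <;> exact (totalDegree_pow _ _).trans (by gcongr)
    _ ≤ b - 1 := by have := mem_range.mp hi; omega

theorem totalDegree_monomial_sub_shiftDown_le (j : Fin n) (β : Fin n →₀ ℕ) (c : R) :
    (monomial β c - shiftDown j (monomial β c)).totalDegree ≤ β.degree - 1 := by
  rcases Nat.eq_zero_or_pos (β j) with hβ | hβ
  · simp [shiftDown_monomial_of_apply_eq_zero j hβ]
  have hsplit : (monomial β c : MvPolynomial (Fin n) R) = monomial (β.erase j) c * X j ^ β j := by
    rw [X_pow_eq_monomial, monomial_mul, mul_one, Finsupp.erase_add_single]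
  have hdeg : β.degree = (β.erase j).degree + β j := by
    conv_lhs => rw [← Finsupp.erase_add_single j β]
    rw [map_add, Finsupp.degree_single]
  rw [hsplit, map_mul, map_pow, shiftDown_monomial_of_apply_eq_zero j Finsupp.erase_same,
    ← mul_sub]
  have hX : shiftDown j (X j : MvPolynomial (Fin n) R) = X j - 1 := by simp [shiftDown]
  rw [hX]
  calc _ ≤ (monomial (β.erase j) c : MvPolynomial (Fin n) R).totalDegree
        + ((X j : MvPolynomial (Fin n) R) ^ β j - (X j - 1) ^ β j).totalDegree :=
          totalDegree_mul _ _
    _ ≤ (β.erase j).degree + (β j - 1) :=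
        add_le_add (totalDegree_monomial_le _ _) (totalDegree_X_pow_sub_X_sub_one_pow_le j _)
    _ = β.degree - 1 := by omega

theorem totalDegree_sub_shiftDown_le (j : Fin n) (Q : MvPolynomial (Fin n) R) :
    (Q - shiftDown j Q).totalDegree ≤ Q.totalDegree - 1 := by
  conv_lhs => rw [Q.as_sum, map_sum, ← sum_sub_distrib]
  exact totalDegree_finsetSum_le fun β hβ => (totalDegree_monomial_sub_shiftDown_le j β _).trans
    (Nat.sub_le_sub_right (le_totalDegree hβ) 1)

end PolynomialDifference

theorem discDiffMulti_zero {n : ℕ} {V : Type*} [AddCommGroup V] :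
    discDiffMulti (0 : Fin n → ℕ) = (id : ((Fin n → ℤ) → V) → _) := by
  simp [discDiffMulti]

section LatticeRestriction

variable {n : ℕ} {R : Type*} [CommRing R]

def IsPolynomialOfDegreeLE (t : ℕ) (f : (Fin n → ℤ) → R) : Prop :=
  ∃ Q : MvPolynomial (Fin n) R, Q.totalDegree ≤ t ∧ f = fun k => eval (fun i => (k i : R)) Q

theorem isPolynomialOfDegreeLE_eval (Q : MvPolynomial (Fin n) R) :
    IsPolynomialOfDegreeLE Q.totalDegree fun k : Fin n → ℤ => eval (fun i => (k i : R)) Q :=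
  ⟨Q, le_rfl, rfl⟩

theorem IsPolynomialOfDegreeLE.discDiff {t : ℕ} {f : (Fin n → ℤ) → R}
    (hf : IsPolynomialOfDegreeLE t f) (j : Fin n) :
    IsPolynomialOfDegreeLE (t - 1) (discDiff j f) := by
  obtain ⟨Q, hQ, rfl⟩ := hf
  refine ⟨Q - shiftDown j Q, (totalDegree_sub_shiftDown_le j Q).trans (by omega), ?_⟩
  funext k
  have hcast : (fun i => ((k - Pi.single j 1 : Fin n → ℤ) i : R))
      = (fun i => (k i : R)) - Pi.single j 1 := by
    funext i
    by_cases h : i = j <;> simp [h]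
  simp only [_root_.discDiff, map_sub, eval_shiftDown, hcast]

theorem IsPolynomialOfDegreeLE.iterate_discDiff {t : ℕ} {f : (Fin n → ℤ) → R}
    (hf : IsPolynomialOfDegreeLE t f) (j : Fin n) (e : ℕ) :
    IsPolynomialOfDegreeLE (t - e) ((_root_.discDiff j)^[e] f) := by
  induction e with
  | zero => exact hf
  | succ e ih => rw [Function.iterate_succ_apply', ← Nat.sub_sub]; exact ih.discDiff j

theorem IsPolynomialOfDegreeLE.discDiffMulti {t : ℕ} {f : (Fin n → ℤ) → R}
    (hf : IsPolynomialOfDegreeLE t f) (γ : Fin n → ℕ) :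
    IsPolynomialOfDegreeLE (t - ∑ i, γ i) (_root_.discDiffMulti γ f) := by
  rw [_root_.discDiffMulti, Fin.sum_univ_def]
  induction List.finRange n with
  | nil => exact hf
  | cons j l ih =>
    rw [List.foldr_cons, Function.comp_apply, List.map_cons, List.sum_cons, add_comm,
      ← Nat.sub_sub]
    exact ih.iterate_discDiff j (γ j)

end LatticeRestriction

theorem MvPolynomial.IsHomogeneous.eval_smul {σ R : Type*} [CommSemiring R] {φ : MvPolynomial σ R}
    {d : ℕ} (hφ : φ.IsHomogeneous d) (r : R) (x : σ → R) :
    eval (r • x) φ = r ^ d * eval x φ := by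
  simp only [eval_eq, mul_sum]
  refine sum_congr rfl fun β hβ => ?_
  simp only [Pi.smul_apply, smul_eq_mul, mul_pow, prod_mul_distrib, prod_pow_eq_pow_sum,
    ← hφ.degree_eq_sum_deg_support hβ]
  ring

theorem exists_norm_eval_le_mul_pow {σ 𝕜 : Type*} [Fintype σ] [NormedField 𝕜]
    (Q : MvPolynomial σ 𝕜) {t : ℕ} (hQ : Q.totalDegree ≤ t) :
    ∃ C > 0, ∀ (M : ℝ) (x : σ → 𝕜), 1 ≤ M → (∀ i, ‖x i‖ ≤ M) → ‖eval x Q‖ ≤ C * M ^ t := by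
  refine ⟨∑ β ∈ Q.support, ‖coeff β Q‖ + 1, by positivity, fun M x hM hx => ?_⟩
  have hmonomial : ∀ β ∈ Q.support, ‖coeff β Q * ∏ i, x i ^ β i‖ ≤ ‖coeff β Q‖ * M ^ t := by
    intro β hβ
    rw [norm_mul, norm_prod]
    gcongr
    calc ∏ i, ‖x i ^ β i‖ ≤ ∏ i, M ^ β i := by
          gcongr with i; rw [norm_pow]; gcongr; exact hx i
      _ = M ^ β.degree := by rw [prod_pow_eq_pow_sum, Finsupp.degree_eq_sum]
      _ ≤ M ^ t := pow_le_pow_right₀ hM ((le_totalDegree hβ).trans hQ)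
  calc ‖eval x Q‖ ≤ ∑ β ∈ Q.support, ‖coeff β Q‖ * M ^ t := by
        rw [eval_eq']; exact (norm_sum_le _ _).trans (sum_le_sum hmonomial)
    _ ≤ (∑ β ∈ Q.support, ‖coeff β Q‖ + 1) * M ^ t := by
        rw [← sum_mul]; gcongr; linarith

theorem MvPolynomial.IsHomogeneous.exists_pos_mul_norm_pow_le {ι : Type*} [Fintype ι]
    {H : MvPolynomial ι ℂ} {d : ℕ} (hH : H.IsHomogeneous d) (hd : 0 < d)
    (hne : ∀ ξ : EuclideanSpace ℝ ι, ξ ≠ 0 → eval (fun i => (ξ i : ℂ)) H ≠ 0) :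
    ∃ c > 0, ∀ x : EuclideanSpace ℝ ι, c * ‖x‖ ^ d ≤ ‖eval (fun i => (x i : ℂ)) H‖ := by
  set g : EuclideanSpace ℝ ι → ℝ := fun x => ‖eval (fun i => (x i : ℂ)) H‖
  have hg : Continuous g := ((continuous_eval H).comp (by fun_prop)).norm
  have hscale : ∀ x : EuclideanSpace ℝ ι, x ≠ 0 → g x = ‖x‖ ^ d * g (‖x‖⁻¹ • x) := by
    intro x hx
    conv_lhs => rw [← smul_inv_smul₀ (norm_ne_zero_iff.mpr hx) x]
    have hcast : (fun i => (((‖x‖ • ‖x‖⁻¹ • x : EuclideanSpace ℝ ι) i : ℝ) : ℂ))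
        = (‖x‖ : ℂ) • fun i => (((‖x‖⁻¹ • x : EuclideanSpace ℝ ι) i : ℝ) : ℂ) := by
      funext i; simp
    simp only [g, hcast, hH.eval_smul, norm_mul, norm_pow, Complex.norm_real, norm_norm]
  have hsphere : ∀ x : EuclideanSpace ℝ ι, x ≠ 0 → ‖x‖⁻¹ • x ∈ Metric.sphere 0 1 := fun x hx => by
    simp [norm_smul, norm_ne_zero_iff.mpr hx]
  rcases (Metric.sphere (0 : EuclideanSpace ℝ ι) 1).eq_empty_or_nonempty with hempty | hnonempty
  · refine ⟨1, one_pos, fun x => ?_⟩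
    obtain rfl : x = 0 := by
      by_contra hx; simpa [hempty] using hsphere x hx
    simp [zero_pow hd.ne']
  obtain ⟨ξ₀, hξ₀, hmin⟩ := (isCompact_sphere 0 1).exists_isMinOn hnonempty hg.continuousOn
  have hξ₀ne : ξ₀ ≠ 0 := ne_zero_of_mem_unit_sphere ⟨ξ₀, hξ₀⟩
  refine ⟨g ξ₀, norm_pos_iff.mpr (hne ξ₀ hξ₀ne), fun x => ?_⟩
  rcases eq_or_ne x 0 with rfl | hx
  · simp [zero_pow hd.ne']
  rw [mul_comm]
  exact (hscale x hx).ge.trans' (by gcongr; exact hmin (hsphere x hx))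

theorem MvPolynomial.totalDegree_sub_homogeneousComponent_totalDegree_le {σ R : Type*}
    [CommRing R] (P : MvPolynomial σ R) :
    (P - homogeneousComponent P.totalDegree P).totalDegree ≤ P.totalDegree - 1 := by
  have hlower : P - homogeneousComponent P.totalDegree P
      = ∑ i ∈ range P.totalDegree, homogeneousComponent i P :=
    sub_eq_of_eq_add (by
      rw [← sum_range_succ (fun i => homogeneousComponent i P), sum_homogeneousComponent])
  rw [hlower]
  exact totalDegree_finsetSum_le fun i hi =>
    (homogeneousComponent_isHomogeneous i P).totalDegree_le.trans
      (Nat.le_sub_one_of_lt (mem_range.mp hi))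

theorem IsElliptic.exists_pos_mul_norm_pow_le {n : ℕ} {P : MvPolynomial (Fin n) ℂ}
    (hP : IsElliptic P) (hd : 0 < P.totalDegree) :
    ∃ c > 0, ∃ R, ∀ x : EuclideanSpace ℝ (Fin n), R ≤ ‖x‖ →
      c * ‖x‖ ^ P.totalDegree ≤ ‖eval (fun i => (x i : ℂ)) P‖ := by
  set d := P.totalDegree
  set H := homogeneousComponent d P
  obtain ⟨c, hc, hH⟩ := (homogeneousComponent_isHomogeneous d P).exists_pos_mul_norm_pow_le hd hP
  obtain ⟨C, -, hT⟩ := exists_norm_eval_le_mul_pow (P - H)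
    (totalDegree_sub_homogeneousComponent_totalDegree_le P)
  refine ⟨c / 2, by positivity, max 1 (2 * C / c), fun x hx => ?_⟩
  have hx1 : 1 ≤ ‖x‖ := (le_max_left _ _).trans hx
  have hxC : 2 * C ≤ c * ‖x‖ := by
    have := (le_max_right _ _).trans hx; rwa [div_le_iff₀ hc, mul_comm ‖x‖] at this
  have htail : ‖eval (fun i => (x i : ℂ)) (P - H)‖ ≤ C * ‖x‖ ^ (d - 1) :=
    hT _ _ hx1 fun i => (Complex.norm_real _).trans_le (PiLp.norm_apply_le x i)
  have hdominate : C * ‖x‖ ^ (d - 1) ≤ c / 2 * ‖x‖ ^ d := by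
    have hpow : ‖x‖ ^ d = ‖x‖ ^ (d - 1) * ‖x‖ := by rw [← pow_succ, Nat.sub_add_cancel hd]
    rw [hpow]
    nlinarith [pow_nonneg (norm_nonneg x) (d - 1)]
  have htriangle : ‖eval (fun i => (x i : ℂ)) H‖
      ≤ ‖eval (fun i => (x i : ℂ)) P‖ + ‖eval (fun i => (x i : ℂ)) (P - H)‖ := by
    conv_lhs => rw [← sub_sub_cancel P H, map_sub]
    exact norm_sub_le _ _
  linarith [hH x]

theorem eventually_cofinite_le_norm_intCast {n : ℕ} (R : ℝ) :
    ∀ᶠ k : Fin n → ℤ in cofinite,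
      R ≤ ‖(WithLp.toLp 2 fun i => (k i : ℝ) : EuclideanSpace ℝ (Fin n))‖ := by
  rw [← cocompact_eq_cofinite]
  filter_upwards [tendsto_norm_cocompact_atTop.eventually_ge_atTop R] with k hk
  refine hk.trans ((pi_norm_le_iff_of_nonneg (norm_nonneg _)).2 fun i => ?_)
  rw [Int.norm_eq_abs]
  simpa using PiLp.norm_apply_le (WithLp.toLp 2 fun i => (k i : ℝ) : EuclideanSpace ℝ (Fin n)) i

/-- Discrete estimate for elliptic polynomials:
`|k|^{|α|} |Δ^α(P|_ℤⁿ)(k)| ≤ C |P(k)|` outside a finite set. -/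
theorem discDiffMulti_elliptic_estimate {n : ℕ} (P : MvPolynomial (Fin n) ℂ)
    (hP : IsElliptic P) (α : Fin n → ℕ) (hα : (∑ i, α i) ≤ P.totalDegree) :
    ∃ C : ℝ, 0 < C ∧ ∃ G : Finset (Fin n → ℤ),
      ∀ k : Fin n → ℤ, k ∉ G →
        Real.sqrt (∑ i, ((k i : ℝ)) ^ 2) ^ (∑ i, α i) *
          ‖discDiffMulti α (fun m => MvPolynomial.eval (fun i => (m i : ℂ)) P) k‖ ≤
            C * ‖MvPolynomial.eval (fun i => (k i : ℂ)) P‖ := by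
  rcases Nat.eq_zero_or_pos P.totalDegree with hd | hd
  · obtain rfl : α = 0 := funext fun i => sum_eq_zero_iff.mp (by omega) i (mem_univ i)
    exact ⟨1, one_pos, ∅, fun k _ => by simp [discDiffMulti_zero]⟩
  obtain ⟨c, hc, R, hlower⟩ := hP.exists_pos_mul_norm_pow_le hd
  obtain ⟨D, hDdeg, hD⟩ := (isPolynomialOfDegreeLE_eval P).discDiffMulti α
  obtain ⟨C, hC, hupper⟩ := exists_norm_eval_le_mul_pow D hDdeg
  have hfar := eventually_cofinite.mp (eventually_cofinite_le_norm_intCast (n := n) (max R 1))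
  refine ⟨C / c, by positivity, hfar.toFinset, fun k hk => ?_⟩
  set x : EuclideanSpace ℝ (Fin n) := WithLp.toLp 2 fun i => (k i : ℝ)
  have hxR : max R 1 ≤ ‖x‖ := by simpa using hk
  have hnorm : Real.sqrt (∑ i, ((k i : ℝ)) ^ 2) = ‖x‖ := by simp [x, EuclideanSpace.norm_eq]
  have hD_le : ‖eval (fun i => (k i : ℂ)) D‖ ≤ C * ‖x‖ ^ (P.totalDegree - ∑ i, α i) :=
    hupper _ _ ((le_max_right _ _).trans hxR) fun i => by
      simpa [x] using PiLp.norm_apply_le x i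
  have hP_ge : c * ‖x‖ ^ P.totalDegree ≤ ‖eval (fun i => (k i : ℂ)) P‖ := by
    simpa [x] using hlower x ((le_max_left _ _).trans hxR)
  rw [hnorm, hD]
  calc ‖x‖ ^ (∑ i, α i) * ‖eval (fun i => (k i : ℂ)) D‖
      ≤ ‖x‖ ^ (∑ i, α i) * (C * ‖x‖ ^ (P.totalDegree - ∑ i, α i)) := by gcongr
    _ = C / c * (c * ‖x‖ ^ P.totalDegree) := by
        rw [mul_left_comm, ← pow_add, Nat.add_sub_cancel' hα]; field_simp
    _ ≤ C / c * ‖eval (fun i => (k i : ℂ)) P‖ := by gcongr
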